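/- arXiv:1005.3082 — 2 statements merged into one kernel-verified Lean document; each statement's English description precedes it below -/
import Mathlib

section
/- Let k be an algebraically closed field and let C ⊆ k^n be a Zariski-closed cone (i.e. λ c ∈ C for all λ ∈ k and c ∈ C) such that C meets the last coordinate axis { (0, …, 0, λ) : λ ∈ k } only in the origin. Let φ : k^n → k^{n−1} be the projection onto the first n − 1 coordinates. Then for every Zariski-closed subset V ⊆ C, the image φ(V) is Zariski-closed in k^{n−1}. -/
/-!
Since `C` is a closed cone, the homogeneous components of a polynomial vanishing on `C` vanish
on `C` as well; as `e = (0, …, 0, 1) ∉ C`, this yields a homogeneous `g` of degree `d` vanishing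
on `C` with `g(e) ≠ 0`, i.e. with `X_last ^ d` occurring in `g`. Hence `g` is, up to a unit,
monic in `X_last`, so the coordinate ring of `V` is integral over `k[X_0, …, X_{n-1}]`. By lying
over, every maximal ideal of `k[X_0, …, X_{n-1}]` containing the contracted ideal of `V` comes
from a maximal ideal of the coordinate ring of `V`; by the Nullstellensatz these are points, so
the zero locus of the contracted ideal is exactly the projection of `V`.
-/

open MvPolynomial

/-- A subset of affine space `ι → k` is Zariski-closed if it is the common zero locus
of a set of polynomials in the coordinates. -/
def ZariskiClosed {k : Type*} [CommRing k] {ι : Type*} (S : Set (ι → k)) : Prop :=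
  ∃ I : Set (MvPolynomial ι k), S = {x | ∀ f ∈ I, MvPolynomial.eval x f = 0}

namespace MvPolynomial

theorem IsHomogeneous.eval_smul {R σ : Type*} [CommSemiring R] {g : MvPolynomial σ R} {d : ℕ}
    (hg : g.IsHomogeneous d) (a : R) (x : σ → R) :
    eval (a • x) g = a ^ d * eval x g := by
  rw [eval_eq, eval_eq, Finset.mul_sum]
  refine Finset.sum_congr rfl fun s hs => ?_
  have hdeg : ∑ i ∈ s.support, s i = d := by
    simpa [Finsupp.weight_apply, Finsupp.sum] using hg (mem_support_iff.mp hs)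
  simp only [Pi.smul_apply, smul_eq_mul, mul_pow, Finset.prod_mul_distrib,
    Finset.prod_pow_eq_pow_sum, hdeg]
  ring

theorem eval_homogeneousComponent_eq_zero_of_forall_eval_smul {R σ : Type*} [CommRing R]
    [IsDomain R] [Infinite R] {f : MvPolynomial σ R} {x : σ → R}
    (hf : ∀ a : R, eval (a • x) f = 0) (i : ℕ) :
    eval x (homogeneousComponent i f) = 0 := by
  have hP : ∑ j ∈ Finset.range (f.totalDegree + 1),
      Polynomial.monomial j (eval x (homogeneousComponent j f)) = 0 := by
    refine Polynomial.funext fun a => ?_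
    rw [Polynomial.eval_zero, ← hf a]
    conv_rhs => rw [← f.sum_homogeneousComponent]
    rw [map_sum, Polynomial.eval_finsetSum]
    refine Finset.sum_congr rfl fun j _ => ?_
    rw [Polynomial.eval_monomial, (homogeneousComponent_isHomogeneous j f).eval_smul, mul_comm]
  by_cases hi : i ≤ f.totalDegree
  · simpa [Polynomial.finsetSum_coeff, Polynomial.coeff_monomial, Nat.lt_succ_iff, hi]
      using congrArg (Polynomial.coeff · i) hP
  · rw [homogeneousComponent_eq_zero _ _ (not_le.mp hi), map_zero]

theorem IsHomogeneous.eval_single_one {R σ : Type*} [CommSemiring R] [DecidableEq σ]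
    {g : MvPolynomial σ R} {d : ℕ} (hg : g.IsHomogeneous d) (i : σ) :
    eval (Pi.single i 1) g = coeff (Finsupp.single i d) g := by
  rw [eval_eq, Finset.sum_eq_single (Finsupp.single i d)]
  · rw [Finset.prod_eq_one, mul_one]
    intro j hj
    rw [Finset.mem_singleton.mp (Finsupp.support_single_subset hj), Pi.single_eq_same, one_pow]
  · intro s hs hne
    obtain ⟨j, hj, hji⟩ : ∃ j ∈ s.support, j ≠ i := by
      by_contra! h
      have hsi : s = Finsupp.single i (s i) := Finsupp.support_subset_singleton.mp
        fun j hj => Finset.mem_singleton.mpr (h j hj)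
      have hdeg := hg (mem_support_iff.mp hs)
      rw [hsi] at hdeg
      simp only [Finsupp.weight_single, Pi.one_apply, smul_eq_mul, mul_one] at hdeg
      exact hne (hdeg ▸ hsi)
    rw [Finset.prod_eq_zero hj, mul_zero]
    rw [Pi.single_eq_of_ne hji, zero_pow (Finsupp.mem_support_iff.mp hj)]
  · intro h
    rw [notMem_support_iff.mp h, zero_mul]

theorem isUnit_leadingCoeff_optionEquivLeft {R σ : Type*} [CommSemiring R]
    {p : MvPolynomial (Option σ) R} (hu : IsUnit (coeff (Finsupp.single none p.totalDegree) p)) :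
    IsUnit (optionEquivLeft R σ p).leadingCoeff := by
  nontriviality R
  have hcoeff : (optionEquivLeft R σ p).coeff p.totalDegree
      = C (coeff (Finsupp.single none p.totalDegree) p) := by
    have hdeg := totalDegree_coeff_optionEquivLeft_add_le R σ p p.totalDegree le_rfl
    have hzero : ((optionEquivLeft R σ p).coeff p.totalDegree).totalDegree = 0 := by omega
    rw [totalDegree_eq_zero_iff_eq_C.mp hzero, optionEquivLeft_coeff_coeff]
    congr
  have hnat : (optionEquivLeft R σ p).natDegree = p.totalDegree :=
    le_antisymm ((natDegree_optionEquivLeft R p).trans_le (degreeOf_le_totalDegree p none))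
      (Polynomial.le_natDegree_of_ne_zero (by simpa [hcoeff] using hu.ne_zero))
  rw [Polynomial.leadingCoeff, hnat, hcoeff]
  exact hu.map C

theorem isIntegral_quotient_rename_of_isUnit_coeff {R ι σ : Type*} [CommRing R]
    (e : ι ≃ Option σ) {J : Ideal (MvPolynomial ι R)} {p : MvPolynomial ι R} (hpJ : p ∈ J)
    (hu : IsUnit (coeff (Finsupp.single (e.symm none) p.totalDegree) p)) :
    ((Ideal.Quotient.mk J).comp (rename (e.symm ∘ some)).toRingHom).IsIntegral := by
  -- `E` reads polynomials as polynomials in `X (e.symm none)`; it turns `p` into one with a unit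
  -- leading coefficient, which gives a monic equation for `x`.
  set E := (renameEquiv R e).trans (optionEquivLeft R σ)
  let _ : Algebra (MvPolynomial σ R) (MvPolynomial ι R ⧸ J) :=
    ((Ideal.Quotient.mk J).comp (rename (e.symm ∘ some)).toRingHom).toAlgebra
  set x := Ideal.Quotient.mk J (X (e.symm none))
  have haeval (q : Polynomial (MvPolynomial σ R)) :
      Polynomial.aeval x q = Ideal.Quotient.mk J (E.symm q) := by
    have hhom : (Polynomial.aeval x).toRingHom
        = (Ideal.Quotient.mk J).comp E.symm.toRingEquiv.toRingHom :=
      Polynomial.ringHom_ext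
        (fun a => by
          simp [E, optionEquivLeft_symm_apply, rename_rename, RingHom.algebraMap_toAlgebra])
        (by simp [E, x, optionEquivLeft_symm_apply])
    exact RingHom.congr_fun hhom q
  have hE : IsUnit (E p).leadingCoeff := by
    have hEp : E p = optionEquivLeft R σ (renameEquiv R e p) := rfl
    rw [hEp]
    refine isUnit_leadingCoeff_optionEquivLeft ?_
    rwa [totalDegree_renameEquiv, renameEquiv_apply, ← e.apply_symm_apply none,
      ← Finsupp.mapDomain_single, coeff_rename_mapDomain _ e.injective]
  have hx : IsIntegral (MvPolynomial σ R) x := by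
    refine ⟨_, Polynomial.monic_of_isUnit_leadingCoeff_inv_smul hE, ?_⟩
    rw [← Polynomial.aeval_def, haeval, Units.smul_def, Polynomial.smul_eq_C_mul, map_mul,
      AlgEquiv.symm_apply_apply, Ideal.Quotient.eq_zero_iff_mem]
    exact J.mul_mem_left _ hpJ
  intro b
  obtain ⟨s, rfl⟩ := Ideal.Quotient.mk_surjective b
  rw [← E.symm_apply_apply s, ← haeval]
  exact adjoin_le_integralClosure hx (Polynomial.aeval_mem_adjoin_singleton _ _)

theorem image_zeroLocus_eq_zeroLocus_comap_of_isIntegral {k σ τ : Type*} [Field k]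
    [IsAlgClosed k] [Finite σ] [Finite τ] (φ : τ → σ) {J : Ideal (MvPolynomial σ k)}
    (hJ : ((Ideal.Quotient.mk J).comp (rename φ).toRingHom).IsIntegral) :
    (fun x => x ∘ φ) '' zeroLocus k J = zeroLocus k (J.comap (rename φ)) := by
  refine subset_antisymm ?_ fun y hy => ?_
  · rintro _ ⟨x, hx, rfl⟩ t ht
    simpa [coe_aeval_eq_eval, eval_rename] using hx _ ht
  let _ : Algebra (MvPolynomial τ k) (MvPolynomial σ k ⧸ J) :=
    ((Ideal.Quotient.mk J).comp (rename φ).toRingHom).toAlgebra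
  have _ : Algebra.IsIntegral (MvPolynomial τ k) (MvPolynomial σ k ⧸ J) := ⟨hJ⟩
  have _ : (vanishingIdeal k {y}).IsMaximal :=
    isMaximal_iff_eq_vanishingIdeal_singleton.mpr ⟨y, rfl⟩
  have hker : RingHom.ker (algebraMap (MvPolynomial τ k) (MvPolynomial σ k ⧸ J))
      ≤ vanishingIdeal k {y} := by
    rw [RingHom.algebraMap_toAlgebra, ← RingHom.comap_ker, Ideal.mk_ker]
    exact le_zeroLocus_iff_le_vanishingIdeal.mp (Set.singleton_subset_iff.mpr hy)
  obtain ⟨P, _, hPy⟩ := Ideal.exists_ideal_over_maximal_of_isIntegral _ hker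
  obtain ⟨x, hx⟩ := isMaximal_iff_eq_vanishingIdeal_singleton.mp
    (Ideal.comap_isMaximal_of_surjective _ Ideal.Quotient.mk_surjective (K := P))
  refine ⟨x, ?_, ?_⟩
  · have hJP : J ≤ P.comap (Ideal.Quotient.mk J) := by
      exact Ideal.mk_ker.symm.trans_le (Ideal.comap_mono bot_le)
    exact le_zeroLocus_iff_le_vanishingIdeal.mpr (hx ▸ hJP) (Set.mem_singleton x)
  · ext i
    have hi : X i - C (y i) ∈ vanishingIdeal k {y} := by simp
    rw [← hPy] at hi
    have hxi : rename φ (X i - C (y i)) ∈ vanishingIdeal k {x} := hx ▸ hi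
    simpa [mem_vanishingIdeal_singleton_iff, sub_eq_zero] using hxi

end MvPolynomial

theorem zariskiClosed_zeroLocus {k σ : Type*} [Field k] (I : Ideal (MvPolynomial σ k)) :
    ZariskiClosed (zeroLocus k I) :=
  ⟨I, by simp [zeroLocus]⟩

theorem ZariskiClosed.zeroLocus_vanishingIdeal {k σ : Type*} [Field k] {V : Set (σ → k)}
    (hV : ZariskiClosed V) : zeroLocus k (vanishingIdeal k V) = V := by
  obtain ⟨I, rfl⟩ := hV
  have hspan : zeroLocus k (Ideal.span I) = {x | ∀ f ∈ I, eval x f = 0} := by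
    simp [zeroLocus_span]
  rw [← hspan]
  exact zeroLocus_vanishingIdeal_galoisConnection.l_u_l_eq_l _

theorem ZariskiClosed.exists_isHomogeneous_of_cone {k σ : Type*} [Field k] [Infinite k]
    {C : Set (σ → k)} (hC : ZariskiClosed C) (hcone : ∀ a : k, ∀ c ∈ C, a • c ∈ C)
    {x : σ → k} (hx : x ∉ C) :
    ∃ (g : MvPolynomial σ k) (d : ℕ), g.IsHomogeneous d ∧ (∀ c ∈ C, eval c g = 0) ∧
      eval x g ≠ 0 := by
  obtain ⟨I, rfl⟩ := hC
  obtain ⟨f, hfI, hfx⟩ : ∃ f ∈ I, eval x f ≠ 0 := by simpa using hx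
  obtain ⟨d, hd⟩ : ∃ d, eval x (homogeneousComponent d f) ≠ 0 := by
    by_contra! h
    rw [← f.sum_homogeneousComponent, map_sum] at hfx
    exact hfx (Finset.sum_eq_zero fun d _ => h d)
  exact ⟨_, d, homogeneousComponent_isHomogeneous d f, fun c hc =>
    eval_homogeneousComponent_eq_zero_of_forall_eval_smul (fun a => hcone a c hc f hfI) d, hd⟩

theorem statement5 (k : Type*) [Field k] [IsAlgClosed k] (n : ℕ)
    (C : Set (Fin (n + 1) → k)) (hCclosed : ZariskiClosed C)
    -- `C` is a cone
    (hcone : ∀ (lam : k), ∀ c ∈ C, lam • c ∈ C)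
    -- `C` meets the last coordinate axis `{(0, …, 0, λ)}` only in the origin
    (haxis : C ∩ {x : Fin (n + 1) → k | ∀ i : Fin n, x i.castSucc = 0} ⊆ {0}) :
    ∀ V ⊆ C, ZariskiClosed V →
      ZariskiClosed ((fun (x : Fin (n + 1) → k) (i : Fin n) => x i.castSucc) '' V) := by
  intro V hVC hV
  have he : Pi.single (Fin.last n) 1 ∉ C := fun he => by
    simpa using congrFun (haxis ⟨he, fun i => Pi.single_eq_of_ne (Fin.castSucc_lt_last i).ne 1⟩)
      (Fin.last n)
  obtain ⟨g, d, hg, hgC, hge⟩ := hCclosed.exists_isHomogeneous_of_cone hcone he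
  rw [hg.eval_single_one] at hge
  have hgV : g ∈ vanishingIdeal k V := mem_vanishingIdeal_iff.mpr fun x hx => hgC x (hVC hx)
  have hint := isIntegral_quotient_rename_of_isUnit_coeff finSuccEquivLast hgV (by
    simpa [hg.totalDegree (fun h => hge (by simp [h]))] using hge.isUnit)
  have hcast : ⇑finSuccEquivLast.symm ∘ some = @Fin.castSucc n :=
    funext finSuccEquivLast_symm_some
  rw [hcast] at hint
  rw [← hV.zeroLocus_vanishingIdeal]
  exact image_zeroLocus_eq_zeroLocus_comap_of_isIntegral _ hint ▸ zariskiClosed_zeroLocus _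
end

section
/- Let k be an algebraically closed field and let m, n be positive integers. Then there exist functions ρ_{ij} : Mat_{m×n}(k) → k for 1 ≤ i, j ≤ n, each of whose graphs is a constructible subset of Mat_{m×n}(k) × k ≅ k^{mn+1} with respect to the Zariski topology, such that for every matrix A ∈ Mat_{m×n}(k), the n×n matrix R(A) = (ρ_{ij}(A)) satisfies: (i) for every j, ρ_{jj}(A) is 0 or 1; (ii) if ρ_{jj}(A) = 0 then the entire j-th row of R(A) is zero; (iii) if ρ_{jj}(A) = 1 then ρ_{ji}(A) = 0 for all i < j; (iv) if ρ_{jj}(A) = 1 then ρ_{ij}(A) = 0 for all i ≠ j; and (v) the rows of R(A) span the same subspace of k^n as the rows of A. -/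
/-!
STATEMENT 11: Over an algebraically closed field `k`, there are functions
`ρ_{ij} : Mat_{m×n}(k) → k` (`1 ≤ i, j ≤ n`) with Zariski-constructible graphs in
`k^{mn+1}` such that for every `A ∈ Mat_{m×n}(k)` the matrix `R(A) = (ρ_{ij}(A))` is a
"triangular reduced row echelon form" of `A`: conditions (i)–(iv) below hold, and the
rows of `R(A)` span the same subspace of `k^n` as the rows of `A`.
Here `Mat_{m×n}(k)` is identified with `k^{mn}` via the index type `Fin m × Fin n`,
and `k^{mn} × k ≅ k^{mn+1}` via the index type `Option (Fin m × Fin n)`.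
-/

open MvPolynomial

/-- A subset of affine space is Zariski-open if its complement is Zariski-closed. -/
def ZariskiOpen {k : Type*} [CommRing k] {ι : Type*} (S : Set (ι → k)) : Prop :=
  ZariskiClosed Sᶜ

/-- A subset of affine space is constructible (for the Zariski topology) if it is a
finite union of sets of the form `U ∩ Z` with `U` Zariski-open and `Z` Zariski-closed. -/
def ZariskiConstructible {k : Type*} [CommRing k] {ι : Type*} (S : Set (ι → k)) : Prop :=
  ∃ (t : ℕ) (U Z : Fin t → Set (ι → k)),
    (∀ i, ZariskiOpen (U i)) ∧ (∀ i, ZariskiClosed (Z i)) ∧ S = ⋃ i, U i ∩ Z i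

/-!
`R(A)` is the reduced row echelon form of `A`, with the row whose pivot lies in column `j`
placed in row `j`. Such a matrix `R` is idempotent and fixes every vector of its row space under
`w ↦ w R`; hence two of them with the same row space satisfy `R = R R'` and `R' = R' R`,
and comparing diagonals and then rows gives `R = R'`. So `R(A)` is determined by the row
space of `A`.

For constructibility, cover `Mat_{m×n}(k)` by the finitely many charts indexed by a set `S` of
columns and a choice `I` of `|S|` rows: the chart consists of the `A` whose pivot columns are `S`
and whose minor `M = A[I, S]` is invertible. On it the nonzero rows of `R(A)` are
`M⁻¹ A[I, :] = (det M)⁻¹ adj(M) A[I, :]`, and the chart is `det M ≠ 0` together with polynomial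
equations, so the graph of each `ρ_{ij}` meets it in a locally closed set. Every matrix lies in
some chart: take for `S` the columns not in the span of the earlier ones.
-/

open Matrix Submodule Set

namespace Matrix

section RowSpace

variable {k m n : Type*} [Field k] [Fintype m]

theorem mem_span_range_row_iff {B : Matrix m n k} {w : n → k} :
    w ∈ span k (range B.row) ↔ ∃ c, c ᵥ* B = w := by
  rw [← range_vecMulLinear]
  rfl

theorem span_range_row_mul_le {l : Type*} (C : Matrix l m k) (B : Matrix m n k) :
    span k (range (C * B).row) ≤ span k (range B.row) :=
  span_le.mpr (range_subset_iff.mpr fun i => mem_span_range_row_iff.mpr ⟨C i, rfl⟩)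

end RowSpace

section TriangularRREF

variable {k ι : Type*} [Field k] [LinearOrder ι]

/-- The reduced row echelon form with each nonzero row moved to the row indexed by its pivot. -/
structure IsTriangularRREF (R : Matrix ι ι k) : Prop where
  diag_eq_zero_or_one : ∀ j, R j j = 0 ∨ R j j = 1
  row_apply_eq_zero : ∀ j, R j j = 0 → ∀ i, R j i = 0
  apply_eq_zero_of_lt : ∀ j, R j j = 1 → ∀ i, i < j → R j i = 0
  col_apply_eq_zero : ∀ j, R j j = 1 → ∀ i, i ≠ j → R i j = 0

theorem mul_apply_diag_of_isUpperTriangular [Fintype ι] {R R' : Matrix ι ι k}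
    (hR : R.IsUpperTriangular) (hR' : R'.IsUpperTriangular) (j : ι) :
    (R * R') j j = R j j * R' j j := by
  rw [mul_apply, Finset.sum_eq_single j]
  · intro l _ hlj
    rcases hlj.lt_or_gt with hlt | hgt
    · rw [hR hlt, zero_mul]
    · rw [hR' hgt, mul_zero]
  · simp

namespace IsTriangularRREF

variable {R R' : Matrix ι ι k}

theorem row_eq_zero (hR : R.IsTriangularRREF) {j : ι} (hj : R j j = 0) : R j = 0 :=
  funext (hR.row_apply_eq_zero j hj)

theorem isUpperTriangular (hR : R.IsTriangularRREF) : R.IsUpperTriangular := by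
  intro i j hji
  rcases hR.diag_eq_zero_or_one i with hi | hi
  · exact hR.row_apply_eq_zero i hi j
  · exact hR.apply_eq_zero_of_lt i hi j hji

variable [Fintype ι]

theorem mul_row_of_diag_eq_one (hR : R.IsTriangularRREF) (hR' : ∀ l, R l l = 0 → R' l = 0)
    {i : ι} (hi : R i i = 1) : (R * R') i = R' i := by
  rw [mul_apply_eq_vecMul, vecMul_eq_sum, Finset.sum_eq_single i, hi, one_smul]
  · intro l _ hli
    rcases hR.diag_eq_zero_or_one l with hl | hl
    · rw [hR' l hl, smul_zero]
    · rw [hR.col_apply_eq_zero l hl i (Ne.symm hli), zero_smul]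
  · simp

theorem mul_self (hR : R.IsTriangularRREF) : R * R = R := by
  funext i
  rcases hR.diag_eq_zero_or_one i with hi | hi
  · rw [mul_apply_eq_vecMul, hR.row_eq_zero hi, zero_vecMul]
  · exact hR.mul_row_of_diag_eq_one (fun l => hR.row_eq_zero) hi

theorem vecMul_eq_of_mem_span (hR : R.IsTriangularRREF) {w : ι → k}
    (hw : w ∈ span k (range R.row)) : w ᵥ* R = w := by
  obtain ⟨c, rfl⟩ := mem_span_range_row_iff.mp hw
  rw [vecMul_vecMul, hR.mul_self]

theorem eq_mul_of_span_le (hR' : R'.IsTriangularRREF)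
    (h : span k (range R.row) ≤ span k (range R'.row)) : R = R * R' := by
  funext i
  exact (hR'.vecMul_eq_of_mem_span (h (subset_span ⟨i, rfl⟩))).symm

theorem diag_eq_one_of_span_le (hR : R.IsTriangularRREF) (hR' : R'.IsTriangularRREF)
    (h : span k (range R.row) ≤ span k (range R'.row)) {j : ι} (hj : R j j = 1) :
    R' j j = 1 := by
  have := congrFun (congrFun (hR'.eq_mul_of_span_le h) j) j
  rwa [mul_apply_diag_of_isUpperTriangular hR.isUpperTriangular hR'.isUpperTriangular, hj,
    one_mul, eq_comm] at this

theorem eq_of_span_eq (hR : R.IsTriangularRREF) (hR' : R'.IsTriangularRREF)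
    (h : span k (range R.row) = span k (range R'.row)) : R = R' := by
  have hdiag (j : ι) : R j j = 1 ↔ R' j j = 1 :=
    ⟨hR.diag_eq_one_of_span_le hR' h.le, hR'.diag_eq_one_of_span_le hR h.ge⟩
  have hzero (j : ι) (hj : R j j = 0) : R' j j = 0 :=
    (hR'.diag_eq_zero_or_one j).resolve_right fun h1 => zero_ne_one (hj ▸ (hdiag j).mpr h1)
  funext i
  rcases hR.diag_eq_zero_or_one i with hi | hi
  · rw [hR.row_eq_zero hi, hR'.row_eq_zero (hzero i hi)]
  · rw [hR'.eq_mul_of_span_le h.le]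
    exact hR.mul_row_of_diag_eq_one (fun l hl => hR'.row_eq_zero (hzero l hl)) hi

end IsTriangularRREF

end TriangularRREF

section PadRows

variable {α ι : Type*} [Zero α] [DecidableEq ι]

def padRows (S : Finset ι) (B : Matrix S ι α) : Matrix ι ι α :=
  of fun i j => if h : i ∈ S then B ⟨i, h⟩ j else 0

theorem padRows_apply_of_mem {S : Finset ι} (B : Matrix S ι α) (s : S) (j : ι) :
    padRows S B s j = B s j := by
  simp [padRows]

theorem padRows_apply_of_notMem {S : Finset ι} (B : Matrix S ι α) {i : ι} (hi : i ∉ S)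
    (j : ι) : padRows S B i j = 0 := by
  simp [padRows, hi]

theorem map_padRows {β : Type*} [Zero β] (f : α → β) (hf : f 0 = 0) (S : Finset ι)
    (B : Matrix S ι α) : (padRows S B).map f = padRows S (B.map f) := by
  ext i j
  by_cases hi : i ∈ S <;> simp [padRows, hi, hf]

end PadRows

section PadRowsField

variable {k ι : Type*} [Field k] [LinearOrder ι] {S : Finset ι} {B : Matrix S ι k}

theorem isTriangularRREF_padRows (hpiv : B.submatrix id ((↑) : S → ι) = 1)
    (hech : ∀ (s : S) (j : ι), j < s → B s j = 0) : (padRows S B).IsTriangularRREF := by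
  have hB (s t : S) : B s t = if s = t then 1 else 0 := by
    rw [← one_apply, ← hpiv, submatrix_apply, id]
  have hdiag (j : ι) : padRows S B j j = if j ∈ S then 1 else 0 := by
    by_cases hj : j ∈ S
    · simpa [hj] using (padRows_apply_of_mem B ⟨j, hj⟩ j).trans (hB ⟨j, hj⟩ ⟨j, hj⟩)
    · simp [hj, padRows_apply_of_notMem]
  refine ⟨fun j => ?_, fun j hj i => ?_, fun j hj i hij => ?_, fun j hj i hij => ?_⟩
  · rw [hdiag]
    split_ifs <;> simp
  · have hj' : j ∉ S := by simpa [hdiag] using hj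
    exact padRows_apply_of_notMem B hj' i
  · have hj' : j ∈ S := by simpa [hdiag] using hj
    exact (padRows_apply_of_mem B ⟨j, hj'⟩ i).trans (hech ⟨j, hj'⟩ i hij)
  · have hj' : j ∈ S := by simpa [hdiag] using hj
    by_cases hi : i ∈ S
    · rw [padRows_apply_of_mem B ⟨i, hi⟩, hB ⟨i, hi⟩ ⟨j, hj'⟩]
      simp [hij]
    · exact padRows_apply_of_notMem B hi j

theorem span_range_row_padRows (S : Finset ι) (B : Matrix S ι k) :
    span k (range (padRows S B).row) = span k (range B.row) := by
  refine le_antisymm (span_le.mpr (range_subset_iff.mpr fun i => ?_))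
    (span_le.mpr (range_subset_iff.mpr fun s => subset_span ⟨s, ?_⟩))
  · by_cases hi : i ∈ S
    · exact subset_span
        ⟨⟨i, hi⟩, funext fun j => (padRows_apply_of_mem B ⟨i, hi⟩ j).symm⟩
    · have : (padRows S B).row i = 0 := funext (padRows_apply_of_notMem B hi)
      rw [SetLike.mem_coe, this]
      exact zero_mem _
  · exact funext fun j => padRows_apply_of_mem B s j

end PadRowsField

section PivotChart

variable {μ ι : Type*} [LinearOrder ι]

/-- Defined over any commutative ring, so that it also makes sense for the matrix of
coordinate polynomials. -/
def adjCoeffs {R : Type*} [CommRing R] (A : Matrix μ ι R) (S : Finset ι) (I : S → μ) :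
    Matrix S ι R :=
  (A.submatrix I ((↑) : S → ι)).adjugate * A.submatrix I id

section Map

variable {R R' : Type*} [CommRing R] [CommRing R'] (f : R →+* R') (A : Matrix μ ι R)
  (S : Finset ι) (I : S → μ)

theorem map_det_submatrix : f (A.submatrix I ((↑) : S → ι)).det =
    ((A.map f).submatrix I ((↑) : S → ι)).det :=
  RingHom.map_det f _

theorem map_adjCoeffs : (adjCoeffs A S I).map f = adjCoeffs (A.map f) S I := by
  rw [adjCoeffs, adjCoeffs, Matrix.map_mul, ← RingHom.mapMatrix_apply, RingHom.map_adjugate]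
  rfl

theorem map_det_smul_sub_mul_adjCoeffs :
    ((A.submatrix I ((↑) : S → ι)).det • A -
        A.submatrix id ((↑) : S → ι) * adjCoeffs A S I).map f =
      ((A.map f).submatrix I ((↑) : S → ι)).det • A.map f -
        (A.map f).submatrix id ((↑) : S → ι) * adjCoeffs (A.map f) S I := by
  rw [Matrix.map_sub _ (map_sub f), Matrix.map_mul, map_adjCoeffs, ← submatrix_map,
    Matrix.map_smulₛₗ f f _ (map_mul f _), map_det_submatrix]

end Map

variable {k : Type*} [Field k]

/-- `S` is the set of pivot columns of `A` and `M = A[I, S]` is invertible: with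
`B = M⁻¹ A[I, :]`, the last two fields say that `A = A[:, S] B` and that `B` is in echelon
form, multiplied through by `det M` so that they are polynomial in the entries of `A`. -/
structure IsPivotChart (A : Matrix μ ι k) (S : Finset ι) (I : S → μ) : Prop where
  det_ne_zero : (A.submatrix I ((↑) : S → ι)).det ≠ 0
  det_smul_eq : (A.submatrix I ((↑) : S → ι)).det • A =
    A.submatrix id ((↑) : S → ι) * adjCoeffs A S I
  adjCoeffs_eq_zero_of_lt : ∀ (s : S) (j : ι), j < s → adjCoeffs A S I s j = 0

noncomputable def pivotCoeffs (A : Matrix μ ι k) (S : Finset ι) (I : S → μ) : Matrix S ι k :=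
  (A.submatrix I ((↑) : S → ι))⁻¹ * A.submatrix I id

variable {A : Matrix μ ι k} {S : Finset ι} {I : S → μ}

theorem adjCoeffs_eq_det_smul_pivotCoeffs (h : (A.submatrix I ((↑) : S → ι)).det ≠ 0) :
    adjCoeffs A S I = (A.submatrix I ((↑) : S → ι)).det • pivotCoeffs A S I := by
  rw [pivotCoeffs, inv_def, Ring.inverse_eq_inv', Matrix.smul_mul, smul_smul,
    mul_inv_cancel₀ h, one_smul, adjCoeffs]

theorem padRows_pivotCoeffs_apply_eq_iff (h : (A.submatrix I ((↑) : S → ι)).det ≠ 0)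
    (i j : ι) (c : k) :
    padRows S (pivotCoeffs A S I) i j = c ↔
      c * (A.submatrix I ((↑) : S → ι)).det - padRows S (adjCoeffs A S I) i j = 0 := by
  have : padRows S (adjCoeffs A S I) i j =
      (A.submatrix I ((↑) : S → ι)).det * padRows S (pivotCoeffs A S I) i j := by
    by_cases hi : i ∈ S <;> simp [padRows, hi, adjCoeffs_eq_det_smul_pivotCoeffs h]
  rw [this, mul_comm, ← mul_sub, mul_eq_zero, sub_eq_zero, eq_comm]
  simp [h]

namespace IsPivotChart

theorem pivotCoeffs_submatrix (h : IsPivotChart A S I) :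
    (pivotCoeffs A S I).submatrix id ((↑) : S → ι) = 1 := by
  rw [pivotCoeffs, submatrix_mul _ _ id id _ Function.bijective_id, submatrix_id_id,
    submatrix_submatrix, Function.comp_id, Function.id_comp,
    nonsing_inv_mul _ (isUnit_iff_ne_zero.mpr h.det_ne_zero)]

theorem eq_mul_pivotCoeffs (h : IsPivotChart A S I) :
    A = A.submatrix id ((↑) : S → ι) * pivotCoeffs A S I := by
  have := h.det_smul_eq
  rw [adjCoeffs_eq_det_smul_pivotCoeffs h.det_ne_zero, Matrix.mul_smul] at this
  exact smul_right_injective _ h.det_ne_zero this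

theorem pivotCoeffs_eq_zero_of_lt (h : IsPivotChart A S I) (s : S) (j : ι) (hj : j < s) :
    pivotCoeffs A S I s j = 0 := by
  have := h.adjCoeffs_eq_zero_of_lt s j hj
  rw [adjCoeffs_eq_det_smul_pivotCoeffs h.det_ne_zero, smul_apply, smul_eq_mul] at this
  exact (mul_eq_zero.mp this).resolve_left h.det_ne_zero

theorem span_range_row_pivotCoeffs (h : IsPivotChart A S I) :
    span k (range (pivotCoeffs A S I).row) = span k (range A.row) := by
  refine le_antisymm ((span_range_row_mul_le _ _).trans (span_mono ?_)) ?_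
  · rintro _ ⟨s, rfl⟩
    exact ⟨I s, rfl⟩
  · conv_lhs => rw [h.eq_mul_pivotCoeffs]
    exact span_range_row_mul_le _ _

theorem isTriangularRREF (h : IsPivotChart A S I) :
    (padRows S (pivotCoeffs A S I)).IsTriangularRREF :=
  isTriangularRREF_padRows h.pivotCoeffs_submatrix h.pivotCoeffs_eq_zero_of_lt

theorem span_range_row_padRows (h : IsPivotChart A S I) :
    span k (range (padRows S (pivotCoeffs A S I)).row) = span k (range A.row) :=
  (Matrix.span_range_row_padRows S _).trans h.span_range_row_pivotCoeffs

end IsPivotChart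

end PivotChart

section PivotColumns

variable {k μ ι : Type*} [Field k] [LinearOrder ι] [Fintype ι]

open Classical in
noncomputable def pivotCols (A : Matrix μ ι k) : Finset ι :=
  {j | A.col j ∉ span k (A.col '' Iio j)}

variable (A : Matrix μ ι k)

theorem mem_pivotCols {j : ι} : j ∈ pivotCols A ↔ A.col j ∉ span k (A.col '' Iio j) := by
  simp [pivotCols]

theorem linearIndepOn_pivotCols : LinearIndepOn k A.col (pivotCols A : Set ι) := by
  suffices ∀ T : Finset ι, T ⊆ pivotCols A → LinearIndepOn k A.col (T : Set ι) from
    this _ subset_rfl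
  intro T
  induction T using Finset.induction_on_max with
  | empty => simp
  | insert a T hlt ih =>
    intro hsub
    rw [Finset.coe_insert]
    refine (ih ((Finset.subset_insert a T).trans hsub)).insert fun hmem => ?_
    exact (mem_pivotCols A).mp (hsub (Finset.mem_insert_self a T))
      (span_mono (image_mono fun x hx => hlt x hx) hmem)

theorem col_mem_span_pivotCols (j : ι) :
    A.col j ∈ span k (A.col '' ({s ∈ pivotCols A | s ≤ j} : Finset ι)) := by
  induction j using WellFoundedLT.induction with
  | _ j ih =>
  by_cases hj : j ∈ pivotCols A
  · exact subset_span ⟨j, by simp [hj], rfl⟩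
  · refine span_le.mpr ?_ (not_not.mp ((mem_pivotCols A).not.mp hj))
    rintro _ ⟨i, hi, rfl⟩
    refine span_mono (image_mono ?_) (ih i hi)
    intro s hs
    simp only [Finset.coe_filter, mem_ofPred_eq] at hs ⊢
    exact ⟨hs.1, hs.2.trans (le_of_lt hi)⟩

theorem exists_linearIndepOn_eq_submatrix_mul :
    ∃ (S : Finset ι) (C : Matrix S ι k), LinearIndepOn k A.col (S : Set ι) ∧
      A = A.submatrix id ((↑) : S → ι) * C ∧ ∀ (s : S) (j : ι), j < s → C s j = 0 := by
  choose c hc using fun j =>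
    (mem_span_image_finset_iff_exists_fun' k).mp (col_mem_span_pivotCols A j)
  refine ⟨pivotCols A, of fun s j => if (s : ι) ≤ j then c j s else 0,
    linearIndepOn_pivotCols A, ?_, fun s j hj => ?_⟩
  · ext a j
    have := congrFun (hc j) a
    simp only [Finset.sum_apply, Pi.smul_apply, col_apply, smul_eq_mul] at this
    rw [mul_apply, ← this, Finset.sum_filter, ← Finset.sum_coe_sort]
    refine Finset.sum_congr rfl fun s _ => ?_
    simp only [submatrix_apply, id, of_apply, mul_ite, mul_zero]
    rw [mul_comm]
  · simp [not_le.mpr hj]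

end PivotColumns

section Existence

variable {k μ ι : Type*} [Field k] [Fintype μ]

theorem exists_submatrix_det_ne_zero [Fintype ι] [DecidableEq ι] {B : Matrix μ ι k}
    (hB : LinearIndependent k B.col) : ∃ I : ι → μ, (B.submatrix I id).det ≠ 0 := by
  have hspan : span k (range B.row) = ⊤ := by
    refine eq_top_of_finrank_eq ?_
    rw [← rank_eq_finrank_span_row, rank_eq_finrank_span_cols, finrank_span_eq_card hB,
      Module.finrank_fintype_fun_eq_card]
  obtain ⟨τ, a, -, hτspan, hτ⟩ := exists_linearIndependent' k B.row
  have : Finite τ := hτ.finite_of_isNoetherian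
  have := Fintype.ofFinite τ
  have hcard : Fintype.card ι = Fintype.card τ := by
    rw [← finrank_span_eq_card hτ, hτspan, hspan, finrank_top,
      Module.finrank_fintype_fun_eq_card]
  obtain ⟨e⟩ := Fintype.card_eq.mp hcard
  refine ⟨a ∘ e, fun h0 => ?_⟩
  have hli : LinearIndependent k (B.submatrix (a ∘ e) id).row := hτ.comp e e.injective
  exact (isUnit_iff_isUnit_det _).mp (linearIndependent_rows_iff_isUnit.mp hli) |>.ne_zero h0

variable [LinearOrder ι] [Fintype ι] (A : Matrix μ ι k)

theorem exists_isPivotChart : ∃ (S : Finset ι) (I : S → μ), IsPivotChart A S I := by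
  obtain ⟨S, C, hli, hAC, hC⟩ := exists_linearIndepOn_eq_submatrix_mul A
  obtain ⟨I, hI⟩ := exists_submatrix_det_ne_zero hli
  set M := A.submatrix I ((↑) : S → ι)
  have hAI : A.submatrix I id = M * C := by
    conv_lhs => rw [hAC]
    rw [submatrix_mul _ _ I id id Function.bijective_id, submatrix_id_id, submatrix_submatrix]
    rfl
  have hN : adjCoeffs A S I = M.det • C := by
    rw [adjCoeffs, hAI, ← Matrix.mul_assoc, adjugate_mul, Matrix.smul_mul, Matrix.one_mul]
  refine ⟨S, I, hI, ?_, fun s j hj => ?_⟩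
  · rw [hN, Matrix.mul_smul, ← hAC]
  · rw [hN, smul_apply, hC s j hj, smul_zero]

theorem exists_isTriangularRREF :
    ∃ R : Matrix ι ι k, R.IsTriangularRREF ∧ span k (range R.row) = span k (range A.row) := by
  obtain ⟨S, I, h⟩ := exists_isPivotChart A
  exact ⟨_, h.isTriangularRREF, h.span_range_row_padRows⟩

noncomputable def rref : Matrix ι ι k :=
  (exists_isTriangularRREF A).choose

theorem isTriangularRREF_rref : (rref A).IsTriangularRREF :=
  (exists_isTriangularRREF A).choose_spec.1

theorem span_range_row_rref : span k (range (rref A).row) = span k (range A.row) :=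
  (exists_isTriangularRREF A).choose_spec.2

variable {A}

theorem IsPivotChart.rref_eq {S : Finset ι} {I : S → μ} (h : IsPivotChart A S I) :
    rref A = padRows S (pivotCoeffs A S I) :=
  (isTriangularRREF_rref A).eq_of_span_eq h.isTriangularRREF
    ((span_range_row_rref A).trans h.span_range_row_padRows.symm)

end Existence

end Matrix

section Zariski

variable {k σ : Type*} [CommRing k]

def ZariskiLocallyClosed (T : Set (σ → k)) : Prop :=
  ∃ U Z, ZariskiOpen U ∧ ZariskiClosed Z ∧ T = U ∩ Z

theorem zariskiClosed_setOf_forall_eval_eq_zero {E : Type*} (p : E → MvPolynomial σ k) :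
    ZariskiClosed {x : σ → k | ∀ e, eval x (p e) = 0} :=
  ⟨range p, by simp⟩

theorem ZariskiClosed.inter {S T : Set (σ → k)} (hS : ZariskiClosed S) (hT : ZariskiClosed T) :
    ZariskiClosed (S ∩ T) := by
  obtain ⟨P, rfl⟩ := hS
  obtain ⟨Q, rfl⟩ := hT
  exact ⟨P ∪ Q, by ext; simp [or_imp, forall_and]⟩

theorem zariskiOpen_setOf_eval_ne_zero (p : MvPolynomial σ k) :
    ZariskiOpen {x : σ → k | eval x p ≠ 0} :=
  ⟨{p}, by ext; simp⟩

theorem zariskiConstructible_iUnion {D : Type*} [Finite D] {T : D → Set (σ → k)}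
    (hT : ∀ d, ZariskiLocallyClosed (T d)) : ZariskiConstructible (⋃ d, T d) := by
  choose U Z hU hZ hTUZ using hT
  obtain ⟨t, ⟨e⟩⟩ := Finite.exists_equiv_fin D
  refine ⟨t, U ∘ e.symm, Z ∘ e.symm, fun i => hU _, fun i => hZ _, ?_⟩
  simp_rw [hTUZ]
  exact (e.symm.surjective.iUnion_comp (fun d => U d ∩ Z d)).symm

end Zariski

section Graph

open Matrix

variable {k μ ι : Type*} [Field k]

variable (k) in
noncomputable def coordMatrix (μ ι : Type*) : Matrix μ ι (MvPolynomial (Option (μ × ι)) k) :=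
  of fun a b => X (some (a, b))

def matrixOfCoords (x : Option (μ × ι) → k) : Matrix μ ι k := of fun a b => x (some (a, b))

theorem map_eval_coordMatrix (x : Option (μ × ι) → k) :
    (coordMatrix k μ ι).map (eval x) = matrixOfCoords x := by
  ext
  simp [coordMatrix, matrixOfCoords]

variable [LinearOrder ι] (x : Option (μ × ι) → k) (S : Finset ι) (I : S → μ)

theorem eval_det_coordMatrix_submatrix :
    eval x ((coordMatrix k μ ι).submatrix I ((↑) : S → ι)).det =
      ((matrixOfCoords x).submatrix I ((↑) : S → ι)).det := by
  rw [map_det_submatrix, map_eval_coordMatrix]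

theorem map_eval_adjCoeffs_coordMatrix :
    (adjCoeffs (coordMatrix k μ ι) S I).map (eval x) = adjCoeffs (matrixOfCoords x) S I := by
  rw [map_adjCoeffs, map_eval_coordMatrix]

theorem eval_adjCoeffs_coordMatrix (s : S) (j : ι) :
    eval x (adjCoeffs (coordMatrix k μ ι) S I s j) = adjCoeffs (matrixOfCoords x) S I s j := by
  rw [← map_eval_adjCoeffs_coordMatrix]
  rfl

theorem eval_padRows_adjCoeffs_coordMatrix (i j : ι) :
    eval x (padRows S (adjCoeffs (coordMatrix k μ ι) S I) i j) =
      padRows S (adjCoeffs (matrixOfCoords x) S I) i j := by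
  rw [← map_eval_adjCoeffs_coordMatrix, ← map_padRows _ (map_zero _)]
  rfl

theorem forall_eval_det_smul_sub_mul_adjCoeffs_coordMatrix_eq_zero_iff :
    (∀ a b, eval x ((((coordMatrix k μ ι).submatrix I ((↑) : S → ι)).det •
        coordMatrix k μ ι - (coordMatrix k μ ι).submatrix id ((↑) : S → ι) *
          adjCoeffs (coordMatrix k μ ι) S I) a b) = 0) ↔
      ((matrixOfCoords x).submatrix I ((↑) : S → ι)).det • matrixOfCoords x =
        (matrixOfCoords x).submatrix id ((↑) : S → ι) * adjCoeffs (matrixOfCoords x) S I := by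
  rw [← sub_eq_zero, ← map_eval_coordMatrix, ← map_det_smul_sub_mul_adjCoeffs,
    ← Matrix.ext_iff]
  rfl

theorem zariskiLocallyClosed_setOf_isPivotChart (i j : ι) :
    ZariskiLocallyClosed {x : Option (μ × ι) → k | IsPivotChart (matrixOfCoords x) S I ∧
      padRows S (pivotCoeffs (matrixOfCoords x) S I) i j = x none} := by
  set N := adjCoeffs (coordMatrix k μ ι) S I
  set P := (coordMatrix k μ ι).submatrix I ((↑) : S → ι)
  refine ⟨{x | eval x P.det ≠ 0},
    {x | ∀ ab : μ × ι, eval x ((P.det • coordMatrix k μ ι -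
        (coordMatrix k μ ι).submatrix id ((↑) : S → ι) * N) ab.1 ab.2) = 0} ∩
      {x | ∀ e : {e : S × ι // e.2 < e.1}, eval x (N e.1.1 e.1.2) = 0} ∩
      {x | ∀ _ : Unit, eval x (X none * P.det - padRows S N i j) = 0},
    zariskiOpen_setOf_eval_ne_zero _,
    ((zariskiClosed_setOf_forall_eval_eq_zero _).inter
      (zariskiClosed_setOf_forall_eval_eq_zero _)).inter
      (zariskiClosed_setOf_forall_eval_eq_zero _), ?_⟩
  ext x
  simp only [mem_ofPred_eq, mem_inter_iff, Prod.forall, P, N,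
    forall_eval_det_smul_sub_mul_adjCoeffs_coordMatrix_eq_zero_iff,
    eval_det_coordMatrix_submatrix, eval_adjCoeffs_coordMatrix, eval_padRows_adjCoeffs_coordMatrix,
    map_sub, map_mul, eval_X, forall_const]
  constructor
  · rintro ⟨h, hx⟩
    exact ⟨h.det_ne_zero, ⟨h.det_smul_eq, fun e => h.adjCoeffs_eq_zero_of_lt _ _ e.2⟩,
      (padRows_pivotCoeffs_apply_eq_iff h.det_ne_zero i j _).mp hx⟩
  · rintro ⟨hU, ⟨h1, h2⟩, h3⟩
    exact ⟨⟨hU, h1, fun s j hj => h2 ⟨(s, j), hj⟩⟩,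
      (padRows_pivotCoeffs_apply_eq_iff hU i j _).mpr h3⟩

variable [Fintype μ] [Fintype ι]

theorem setOf_rref_apply_eq (i j : ι) :
    {x : Option (μ × ι) → k | rref (matrixOfCoords x) i j = x none} =
      ⋃ d : Σ S : Finset ι, S → μ, {x | IsPivotChart (matrixOfCoords x) d.1 d.2 ∧
        padRows d.1 (pivotCoeffs (matrixOfCoords x) d.1 d.2) i j = x none} := by
  ext x
  simp only [mem_ofPred_eq, mem_iUnion]
  constructor
  · intro hx
    obtain ⟨S, I, h⟩ := exists_isPivotChart (matrixOfCoords x)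
    exact ⟨⟨S, I⟩, h, h.rref_eq ▸ hx⟩
  · rintro ⟨⟨S, I⟩, h, hx⟩
    exact h.rref_eq ▸ hx

theorem zariskiConstructible_setOf_rref_apply_eq (i j : ι) :
    ZariskiConstructible {x : Option (μ × ι) → k | rref (matrixOfCoords x) i j = x none} := by
  rw [setOf_rref_apply_eq]
  exact zariskiConstructible_iUnion fun d => zariskiLocallyClosed_setOf_isPivotChart d.1 d.2 i j

end Graph

theorem statement11_general (k : Type*) [Field k] (m n : ℕ) :
    ∃ ρ : Fin n → Fin n → ((Fin m × Fin n → k) → k),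
      -- each `ρ_{ij}` has constructible graph in `k^{mn+1}`
      (∀ i j, ZariskiConstructible
        {x : Option (Fin m × Fin n) → k | ρ i j (fun p => x (some p)) = x none}) ∧
      ∀ A : Fin m × Fin n → k,
        -- (i) every diagonal entry of `R(A)` is 0 or 1
        (∀ j, ρ j j A = 0 ∨ ρ j j A = 1) ∧
        -- (ii) if `ρ_jj(A) = 0` then the `j`-th row of `R(A)` is zero
        (∀ j, ρ j j A = 0 → ∀ i, ρ j i A = 0) ∧
        -- (iii) if `ρ_jj(A) = 1` then `ρ_ji(A) = 0` for all `i < j`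
        (∀ j, ρ j j A = 1 → ∀ i, i < j → ρ j i A = 0) ∧
        -- (iv) if `ρ_jj(A) = 1` then `ρ_ij(A) = 0` for all `i ≠ j`
        (∀ j, ρ j j A = 1 → ∀ i, i ≠ j → ρ i j A = 0) ∧
        -- (v) the rows of `R(A)` span the same subspace of `k^n` as the rows of `A`
        Submodule.span k (Set.range fun i : Fin n => fun j : Fin n => ρ i j A) =
          Submodule.span k (Set.range fun i : Fin m => fun j : Fin n => A (i, j)) := by
  refine ⟨fun i j A => rref (of fun a b => A (a, b)) i j,
    fun i j => zariskiConstructible_setOf_rref_apply_eq i j, fun A => ?_⟩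
  obtain ⟨h1, h2, h3, h4⟩ := isTriangularRREF_rref (of fun a b => A (a, b))
  exact ⟨h1, h2, h3, h4, span_range_row_rref _⟩

theorem statement11 (k : Type*) [Field k] [IsAlgClosed k] (m n : ℕ)
    (hm : 0 < m) (hn : 0 < n) :
    ∃ ρ : Fin n → Fin n → ((Fin m × Fin n → k) → k),
      -- each `ρ_{ij}` has constructible graph in `k^{mn+1}`
      (∀ i j, ZariskiConstructible
        {x : Option (Fin m × Fin n) → k | ρ i j (fun p => x (some p)) = x none}) ∧
      ∀ A : Fin m × Fin n → k,
        -- (i) every diagonal entry of `R(A)` is 0 or 1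
        (∀ j, ρ j j A = 0 ∨ ρ j j A = 1) ∧
        -- (ii) if `ρ_jj(A) = 0` then the `j`-th row of `R(A)` is zero
        (∀ j, ρ j j A = 0 → ∀ i, ρ j i A = 0) ∧
        -- (iii) if `ρ_jj(A) = 1` then `ρ_ji(A) = 0` for all `i < j`
        (∀ j, ρ j j A = 1 → ∀ i, i < j → ρ j i A = 0) ∧
        -- (iv) if `ρ_jj(A) = 1` then `ρ_ij(A) = 0` for all `i ≠ j`
        (∀ j, ρ j j A = 1 → ∀ i, i ≠ j → ρ i j A = 0) ∧
        -- (v) the rows of `R(A)` span the same subspace of `k^n` as the rows of `A`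
        Submodule.span k (Set.range fun i : Fin n => fun j : Fin n => ρ i j A) =
          Submodule.span k (Set.range fun i : Fin m => fun j : Fin n => A (i, j)) :=
  statement11_general k m n
end
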